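/- Let K be a nonempty finite type and, for each κ ∈ K, let I κ and J κ be nonempty finite types; set Ω = Σ κ, (I κ × J κ). Let ρ : Matrix Ω Ω ℂ be positive semidefinite with trace 1, and suppose ρ is not block diagonal: there exist κ ≠ κ', a ∈ I κ × J κ, b ∈ I κ' × J κ' with ρ (⟨κ,a⟩, ⟨κ',b⟩) ≠ 0. Then for every t ≥ 0 and every block-separable matrix σ, the matrix (1/(1+t)) • (ρ + t • σ) is not block-separable; i.e. the robustness of ρ is infinite (the set {t : ℝ | t ≥ 0 ∧ ∃ block-separable σ, (1/(1+t)) • (ρ + t • σ) is block-separable} is empty). -/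
import Mathlib


open scoped BigOperators ComplexOrder

/-- A matrix on `Ω = Σ κ, I κ × J κ` is block-separable if it is a finite convex
combination of rank-one projections onto unit vectors each supported in a single
block and there of product form. -/
def BlockSep {K : Type*} [Fintype K] {I J : K → Type*}
    [∀ κ, Fintype (I κ)] [∀ κ, Fintype (J κ)]
    (ρ : Matrix ((κ : K) × (I κ × J κ)) ((κ : K) × (I κ × J κ)) ℂ) : Prop :=
  ∃ (n : ℕ) (lam : Fin n → ℝ) (v : Fin n → ((κ : K) × (I κ × J κ)) → ℂ),
    (∀ t, 0 ≤ lam t) ∧ (∑ t, lam t = 1) ∧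
    (∀ t, ∑ a, Complex.normSq (v t a) = 1) ∧
    (∀ t, ∃ (κ : K) (x : I κ → ℂ) (y : J κ → ℂ),
      (∀ (i : I κ) (j : J κ), v t ⟨κ, (i, j)⟩ = x i * y j) ∧
      (∀ κ' : K, κ' ≠ κ → ∀ b : I κ' × J κ', v t ⟨κ', b⟩ = 0)) ∧
    ρ = ∑ t, (lam t : ℂ) • Matrix.of (fun a b => v t a * starRingEnd ℂ (v t b))

lemma BlockSep.offblock {K : Type*} [Fintype K] {I J : K → Type*}
    [∀ κ, Fintype (I κ)] [∀ κ, Fintype (J κ)]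
    {τ : Matrix ((κ : K) × (I κ × J κ)) ((κ : K) × (I κ × J κ)) ℂ}
    (h : BlockSep τ) {κ κ' : K} (hne : κ ≠ κ') (a : I κ × J κ) (b : I κ' × J κ') :
    τ ⟨κ, a⟩ ⟨κ', b⟩ = 0 := by
  obtain ⟨n, lam, v, _, _, _, hsupp, rfl⟩ := h
  have : ∀ t : Fin n, v t ⟨κ, a⟩ * starRingEnd ℂ (v t ⟨κ', b⟩) = 0 := by
    intro t
    obtain ⟨κ₀, x, y, _, hz⟩ := hsupp t
    by_cases hκ : κ = κ₀
    · have : κ' ≠ κ₀ := fun h' => hne (hκ.trans h'.symm)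
      rw [hz κ' this b, map_zero, mul_zero]
    · rw [hz κ hκ a, zero_mul]
  simp only [Matrix.sum_apply, Matrix.smul_apply, Matrix.of_apply]
  exact Finset.sum_eq_zero fun t _ => by rw [this t, smul_zero]

/-- part of the paper's Proposition 4: a state that is not block
diagonal has infinite robustness of entanglement: no mixing with a block-separable
state ever makes it block-separable. -/
theorem non_block_diagonal_state_has_infinite_robustness
    {K : Type*} [Fintype K] [Nonempty K] {I J : K → Type*}
    [∀ κ, Fintype (I κ)] [∀ κ, Nonempty (I κ)]
    [∀ κ, Fintype (J κ)] [∀ κ, Nonempty (J κ)]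
    (ρ : Matrix ((κ : K) × (I κ × J κ)) ((κ : K) × (I κ × J κ)) ℂ)
    (hpsd : ρ.PosSemidef) (htr : ρ.trace = 1)
    (hnbd : ∃ (κ κ' : K) (a : I κ × J κ) (b : I κ' × J κ'),
      κ ≠ κ' ∧ ρ ⟨κ, a⟩ ⟨κ', b⟩ ≠ 0) :
    {t : ℝ | 0 ≤ t ∧ ∃ σ, BlockSep σ ∧
      BlockSep (((1 + t : ℝ) : ℂ)⁻¹ • (ρ + (t : ℂ) • σ))} = ∅ := by
  ext t
  simp only [Set.mem_setOf_eq, Set.mem_empty_iff_false, iff_false, not_and]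
  rintro ht ⟨σ, hσ, hmix⟩
  obtain ⟨κ, κ', a, b, hne, hρ⟩ := hnbd
  have h1 := hσ.offblock hne a b
  have h2 := hmix.offblock hne a b
  simp only [Matrix.smul_apply, Matrix.add_apply, h1, mul_zero, smul_zero, add_zero,
    smul_eq_mul] at h2
  have h1t : ((1 + t : ℝ) : ℂ) ≠ 0 := by
    simp only [ne_eq, Complex.ofReal_eq_zero]
    linarith
  exact hρ ((mul_eq_zero.mp h2).resolve_left (inv_ne_zero h1t))
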